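/- arXiv:1203.5436 — 2 statements merged into one kernel-verified Lean document; each statement's English description precedes it below -/
import Mathlib

section
/- Every quasimorphism on ℝ (equivalently, on any abelian group A) decomposes as the sum of a group homomorphism to ℝ and a bounded function. Formally: if A is an abelian group and φ : A → ℝ satisfies sup_{a,b} |φ(ab) - φ(a) - φ(b)| < ∞, then there exists a homomorphism h : A → ℝ with sup_{a} |φ(a) - h(a)| < ∞. -/
/-!
If `D` bounds the defect of `φ`, then `n ↦ φ(aⁿ) + D` is subadditive, so by Fekete's lemma the
homogenization `φ̄(a) = lim φ(aⁿ) / n` exists. Since `|φ(aⁿ) - n φ(a)| ≤ (n + 1) D`, dividing by `n`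
gives `|φ(a) - φ̄(a)| ≤ D`. When `a` and `b` commute, `(ab)ⁿ = aⁿbⁿ`, so
`|φ((ab)ⁿ) - φ(aⁿ) - φ(bⁿ)| ≤ D` and dividing by `n` shows that `φ̄` is additive on `a, b`.
-/

open Filter Topology

def QuasimorphismWith {M : Type*} [Mul M] (D : ℝ) (φ : M → ℝ) : Prop :=
  ∀ a b, |φ (a * b) - φ a - φ b| ≤ D

noncomputable def homogenization {M : Type*} [Monoid M] (φ : M → ℝ) (a : M) : ℝ :=
  limUnder atTop fun n : ℕ => φ (a ^ n) / n

theorem abs_le_of_tendsto_div_of_abs_le {u : ℕ → ℝ} {L c d : ℝ}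
    (hu : Tendsto (fun n : ℕ => u n / n) atTop (𝓝 L)) (hbound : ∀ n : ℕ, |u n| ≤ c * n + d) :
    |L| ≤ c := by
  have hrhs : Tendsto (fun n : ℕ => c + d / n) atTop (𝓝 c) := by
    simpa using tendsto_const_nhds.add (tendsto_const_div_atTop_nhds_zero_nat d)
  refine le_of_tendsto_of_tendsto hu.abs hrhs ?_
  filter_upwards [eventually_gt_atTop 0] with n hn
  have hn' : (0 : ℝ) < n := by exact_mod_cast hn
  rw [abs_div, Nat.abs_cast, div_le_iff₀ hn', add_mul, div_mul_cancel₀ d hn'.ne']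
  exact hbound n

namespace QuasimorphismWith

variable {M : Type*} [Monoid M] {φ : M → ℝ} {D : ℝ}

theorem abs_map_one_le (hφ : QuasimorphismWith D φ) : |φ 1| ≤ D := by
  simpa [abs_neg] using hφ 1 1

theorem abs_map_pow_sub_le (hφ : QuasimorphismWith D φ) (a : M) (n : ℕ) :
    |φ (a ^ n) - n * φ a| ≤ D * n + D := by
  induction n with
  | zero => simpa using hφ.abs_map_one_le
  | succ n ih =>
    calc |φ (a ^ (n + 1)) - (n + 1 : ℕ) * φ a|
        = |(φ (a ^ n * a) - φ (a ^ n) - φ a) + (φ (a ^ n) - n * φ a)| := by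
          rw [pow_succ]; push_cast; ring_nf
      _ ≤ D + (D * n + D) := (abs_add_le _ _).trans (add_le_add (hφ _ _) ih)
      _ = D * (n + 1 : ℕ) + D := by push_cast; ring

theorem subadditive_map_pow_add (hφ : QuasimorphismWith D φ) (a : M) :
    Subadditive fun n => φ (a ^ n) + D := fun m n => by
  have := (abs_le.1 (hφ (a ^ m) (a ^ n))).2
  rw [← pow_add] at this
  linarith

theorem bddBelow_map_pow_add_div (hφ : QuasimorphismWith D φ) (a : M) :
    BddBelow (Set.range fun n : ℕ => (φ (a ^ n) + D) / n) := by
  refine ⟨min 0 (φ a - D), ?_⟩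
  rintro _ ⟨n, rfl⟩
  rcases n.eq_zero_or_pos with rfl | hn
  · simp
  have hn' : (0 : ℝ) < n := by exact_mod_cast hn
  rw [le_div_iff₀ hn']
  have hlower := (abs_le.1 (hφ.abs_map_pow_sub_le a n)).1
  have hmin := mul_le_mul_of_nonneg_right (min_le_right 0 (φ a - D)) hn'.le
  linarith

theorem tendsto_map_pow_div (hφ : QuasimorphismWith D φ) (a : M) :
    Tendsto (fun n : ℕ => φ (a ^ n) / n) atTop (𝓝 (homogenization φ a)) := by
  have hsub := hφ.subadditive_map_pow_add a
  have hlim : Tendsto (fun n : ℕ => φ (a ^ n) / n) atTop (𝓝 hsub.lim) := by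
    have := (hsub.tendsto_lim (hφ.bddBelow_map_pow_add_div a)).sub
      (tendsto_const_div_atTop_nhds_zero_nat D)
    rw [sub_zero] at this
    exact this.congr fun n => by rw [add_div, add_sub_cancel_right]
  exact tendsto_nhds_limUnder ⟨_, hlim⟩

theorem abs_sub_homogenization_le (hφ : QuasimorphismWith D φ) (a : M) :
    |φ a - homogenization φ a| ≤ D := by
  have hlim : Tendsto (fun n : ℕ => (n * φ a - φ (a ^ n)) / n) atTop
      (𝓝 (φ a - homogenization φ a)) := by
    refine (tendsto_const_nhds.sub (hφ.tendsto_map_pow_div a)).congr' ?_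
    filter_upwards [eventually_ne_atTop 0] with n hn
    rw [sub_div, mul_div_cancel_left₀ _ (Nat.cast_ne_zero.2 hn)]
  exact abs_le_of_tendsto_div_of_abs_le hlim fun n => by
    simpa only [abs_sub_comm] using hφ.abs_map_pow_sub_le a n

theorem homogenization_mul_of_commute (hφ : QuasimorphismWith D φ) {a b : M}
    (hab : Commute a b) :
    homogenization φ (a * b) = homogenization φ a + homogenization φ b := by
  have hlim : Tendsto (fun n : ℕ => (φ ((a * b) ^ n) - φ (a ^ n) - φ (b ^ n)) / n) atTop
      (𝓝 (homogenization φ (a * b) - homogenization φ a - homogenization φ b)) := by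
    simpa only [sub_div] using ((hφ.tendsto_map_pow_div (a * b)).sub
      (hφ.tendsto_map_pow_div a)).sub (hφ.tendsto_map_pow_div b)
  have hzero := abs_nonpos_iff.1 <| abs_le_of_tendsto_div_of_abs_le hlim fun n => by
    simpa [hab.mul_pow] using hφ (a ^ n) (b ^ n)
  linarith

end QuasimorphismWith

/-- Every quasimorphism on an abelian group is a homomorphism plus a bounded
function. -/
theorem quasimorphism_on_abelian {A : Type*} [CommGroup A] (φ : A → ℝ)
    (hφ : ∃ D : ℝ, ∀ a b : A, |φ (a * b) - φ a - φ b| ≤ D) :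
    ∃ h : A → ℝ, (∀ a b : A, h (a * b) = h a + h b) ∧
      ∃ C : ℝ, ∀ a : A, |φ a - h a| ≤ C := by
  obtain ⟨D, hD⟩ := hφ
  have hφD : QuasimorphismWith D φ := hD
  exact ⟨homogenization φ, fun a b => hφD.homogenization_mul_of_commute (Commute.all a b),
    D, hφD.abs_sub_homogenization_le⟩
end

section
/- Let G be a group, φ : G → ℝ a homogeneous quasimorphism with defect D(φ) > 0, and g ∈ [G,G]. Then |φ(g)| ≤ 2·D(φ)·cl_G(g), where cl_G(g) is the commutator length of g. Consequently |φ(g)| ≤ 2·D(φ)·scl_G(g) after stabilization: |φ(g)| ≤ 2·D(φ)·lim_{n} cl_G(gⁿ)/n. -/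
open Filter
open scoped commutatorElement

/-- The commutator length of `g`: the least `n` such that `g` is a product of
`n` commutators (with the convention `sInf ∅ = 0`). -/
noncomputable def clength {G : Type*} [Group G] (g : G) : ℕ :=
  sInf {n : ℕ | ∃ a b : Fin n → G, g = (List.ofFn (fun i => ⁅a i, b i⁆)).prod}

/-!
Homogeneity makes `φ` conjugation invariant: `φ (h x h⁻¹) - φ x` is bounded by `2 D`, and
replacing `x` by `xⁿ` multiplies it by `n`. Hence `φ ⁅a, b⁆ = φ (a b a⁻¹) + φ b⁻¹ ± D = ± D`, so
in a shortest expression of `g` each of the `cl(g)` commutators costs at most `D`, and so does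
each multiplication. The bound by `scl` follows by applying this to `gⁿ`, as `φ (gⁿ) = n φ g`.
-/

theorem eq_zero_of_forall_nat_mul_abs_le {c C : ℝ} (h : ∀ n : ℕ, n * |c| ≤ C) : c = 0 := by
  by_contra hc
  obtain ⟨n, hn⟩ := exists_nat_gt (C / |c|)
  rw [div_lt_iff₀ (abs_pos.2 hc)] at hn
  linarith [h n]

section CommutatorLength

variable {G : Type*} [Group G]

theorem exists_list_prod_eq_of_mem_commutator {g : G} (hg : g ∈ commutator G) :
    ∃ l : List G, (∀ x ∈ l, x ∈ commutatorSet G) ∧ l.prod = g := by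
  rw [commutator_eq_closure, ← Subgroup.mem_toSubmonoid, Subgroup.closure_toSubmonoid] at hg
  obtain ⟨l, hl, rfl⟩ := Submonoid.exists_list_of_mem_closure hg
  refine ⟨l, fun x hx => ?_, rfl⟩
  rcases hl x hx with hx | ⟨a, b, hab⟩
  · exact hx
  · exact ⟨b, a, by rw [← commutatorElement_inv, hab, inv_inv]⟩

theorem exists_eq_prod_commutatorElement_clength {g : G} (hg : g ∈ commutator G) :
    ∃ a b : Fin (clength g) → G, g = (List.ofFn fun i => ⁅a i, b i⁆).prod := by
  have hne : ∃ n, ∃ a b : Fin n → G, g = (List.ofFn fun i => ⁅a i, b i⁆).prod := by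
    obtain ⟨l, hl, rfl⟩ := exists_list_prod_eq_of_mem_commutator hg
    choose a b hab using fun i => hl (l.get i) (List.get_mem l i)
    exact ⟨l.length, a, b, by simp only [hab, List.ofFn_get]⟩
  exact Nat.sInf_mem hne

end CommutatorLength

section Quasimorphism

variable {G : Type*} [Group G]

def IsQuasimorphism (D : ℝ) (φ : G → ℝ) : Prop :=
  ∀ f g : G, |φ (f * g) - φ f - φ g| ≤ D

def IsHomogeneous (φ : G → ℝ) : Prop :=
  ∀ (g : G) (n : ℤ), φ (g ^ n) = n * φ g

namespace IsHomogeneous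

variable {φ : G → ℝ}

theorem map_one (hφ : IsHomogeneous φ) : φ 1 = 0 := by
  simpa using hφ 1 0

theorem map_inv (hφ : IsHomogeneous φ) (x : G) : φ x⁻¹ = -φ x := by
  simpa using hφ x (-1)

theorem map_pow (hφ : IsHomogeneous φ) (x : G) (n : ℕ) : φ (x ^ n) = n * φ x := by
  simpa using hφ x n

end IsHomogeneous

namespace IsQuasimorphism

variable {φ : G → ℝ} {D : ℝ}

theorem abs_map_mul_le (hφ : IsQuasimorphism D φ) (f g : G) :
    |φ (f * g)| ≤ |φ f| + |φ g| + D := by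
  calc |φ (f * g)| = |(φ (f * g) - φ f - φ g) + φ f + φ g| := by ring_nf
    _ ≤ |φ (f * g) - φ f - φ g| + |φ f| + |φ g| := abs_add_three _ _ _
    _ ≤ |φ f| + |φ g| + D := by linarith [hφ f g]

theorem abs_map_list_prod_le (hφ : IsQuasimorphism D φ) (h_one : φ 1 = 0) {B : ℝ} :
    ∀ l : List G, (∀ x ∈ l, |φ x| ≤ B) → |φ l.prod| ≤ (B + D) * l.length
  | [], _ => by simp [h_one]
  | x :: l, hB => by
    have hx := hB x List.mem_cons_self
    have hl := abs_map_list_prod_le hφ h_one l fun y hy => hB y (List.mem_cons_of_mem x hy)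
    rw [List.prod_cons, List.length_cons, Nat.cast_succ]
    linarith [hφ.abs_map_mul_le x l.prod]

theorem abs_map_conj_sub_le (hφ : IsQuasimorphism D φ) (hhom : IsHomogeneous φ) (h x : G) :
    |φ (h * x * h⁻¹) - φ x| ≤ 2 * D := by
  have h₁ := hφ (h * x) h⁻¹
  have h₂ := hφ h x
  rw [hhom.map_inv] at h₁
  calc |φ (h * x * h⁻¹) - φ x|
      = |(φ (h * x * h⁻¹) - φ (h * x) - -φ h) + (φ (h * x) - φ h - φ x)| := by ring_nf
    _ ≤ D + D := (abs_add_le _ _).trans (add_le_add h₁ h₂)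
    _ = 2 * D := by ring

theorem map_conj (hφ : IsQuasimorphism D φ) (hhom : IsHomogeneous φ) (h x : G) :
    φ (h * x * h⁻¹) = φ x := by
  refine sub_eq_zero.1 (eq_zero_of_forall_nat_mul_abs_le (C := 2 * D) fun n => ?_)
  have := hφ.abs_map_conj_sub_le hhom h (x ^ n)
  rwa [← conj_pow, hhom.map_pow, hhom.map_pow, ← mul_sub, abs_mul, Nat.abs_cast] at this

theorem abs_map_commutatorElement_le (hφ : IsQuasimorphism D φ) (hhom : IsHomogeneous φ)
    (a b : G) : |φ ⁅a, b⁆| ≤ D := by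
  have h := hφ (a * b * a⁻¹) b⁻¹
  rwa [← commutatorElement_def, hφ.map_conj hhom, hhom.map_inv, sub_neg_eq_add,
    sub_add_cancel] at h

theorem abs_map_le_clength (hφ : IsQuasimorphism D φ) (hhom : IsHomogeneous φ) {g : G}
    (hg : g ∈ commutator G) : |φ g| ≤ 2 * D * clength g := by
  obtain ⟨a, b, hab⟩ := exists_eq_prod_commutatorElement_clength hg
  have := hφ.abs_map_list_prod_le hhom.map_one (List.ofFn fun i => ⁅a i, b i⁆) <| by
    simpa only [List.forall_mem_ofFn_iff] using
      fun i => hφ.abs_map_commutatorElement_le hhom (a i) (b i)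
  rwa [List.length_ofFn, ← two_mul, ← hab] at this

end IsQuasimorphism

end Quasimorphism

theorem homogeneous_quasimorphism_cl_bound_general {G : Type*} [Group G]
    (φ : G → ℝ) (D : ℝ)
    (hD : ∀ f g : G, |φ (f * g) - φ f - φ g| ≤ D)
    (hhom : ∀ (g : G) (n : ℤ), φ (g ^ n) = n * φ g)
    (g : G) (hg : g ∈ commutator G) :
    |φ g| ≤ 2 * D * clength g ∧
    ∀ L : ℝ, Tendsto (fun n : ℕ => (clength (g ^ n) : ℝ) / n) atTop (nhds L) →
      |φ g| ≤ 2 * D * L := by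
  have hq : IsQuasimorphism D φ := hD
  have hh : IsHomogeneous φ := hhom
  refine ⟨hq.abs_map_le_clength hh hg, fun L hL => ?_⟩
  refine ge_of_tendsto (hL.const_mul (2 * D)) ?_
  filter_upwards [eventually_gt_atTop 0] with n hn
  have hgn := hq.abs_map_le_clength hh (pow_mem hg n)
  rw [hh.map_pow, abs_mul, Nat.abs_cast] at hgn
  rw [mul_div_assoc', le_div_iff₀ (Nat.cast_pos.2 hn)]
  linarith

/-- Bavard-type inequality: a homogeneous quasimorphism `φ` with defect at most
`D > 0` satisfies `|φ g| ≤ 2 D · cl(g)` for `g ∈ [G,G]`, and consequently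
`|φ g| ≤ 2 D · scl(g)`. -/
theorem homogeneous_quasimorphism_cl_bound {G : Type*} [Group G]
    (φ : G → ℝ) (D : ℝ) (hpos : 0 < D)
    (hD : ∀ f g : G, |φ (f * g) - φ f - φ g| ≤ D)
    (hhom : ∀ (g : G) (n : ℤ), φ (g ^ n) = n * φ g)
    (g : G) (hg : g ∈ commutator G) :
    |φ g| ≤ 2 * D * clength g ∧
    ∀ L : ℝ, Tendsto (fun n : ℕ => (clength (g ^ n) : ℝ) / n) atTop (nhds L) →
      |φ g| ≤ 2 * D * L :=
  homogeneous_quasimorphism_cl_bound_general φ D hD hhom g hg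
end
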